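/- arXiv:1906.00103 — 3 statements merged into one kernel-verified Lean document; each statement's English description precedes it below -/
import Mathlib

section
/- For each n ≥ 1, E_n = 2^{1−n} P_n(2,1), where P_n(t,s) = Σ_{σ∈S_n} t^{pk(σ)} s^{da(σ)} is the peak–double-ascent polynomial and E_n is the n-th Euler number. -/
/-!
Splitting a word with distinct letters at its largest letter `m` writes it as `L ++ m :: R`,
and `m` is a new peak exactly when `L` and `R` are both nonempty. Since only the relative order
of the letters matters, `P n = ∑ σ, 2 ^ pk σ` satisfies
`P (n + 1) = ∑ k, n.choose k * w k * P k * P (n - k)` with `w k = 2` for `0 < k < n` and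
`w k = 1` otherwise. On the analytic side `f = tan + sec` satisfies `2 f' = 1 + f ^ 2`, so
`2 E (n + 1) = [n = 0] + ∑ k, n.choose k * E k * E (n - k)`. Hence `2 ^ n * E n` and
`P n` (doubled for `n ≠ 0`) obey the same recurrence with the same initial value.
-/

open Finset

/-- The Euler numbers `E n`, defined as the Taylor coefficients (times `n!`)
of `tan x + sec x` at `0`, i.e. `E n = (d/dx)^n (tan x + sec x) |_{x=0}`. -/
noncomputable def eulerE (n : ℕ) : ℝ :=
  iteratedDeriv n (fun x : ℝ => Real.tan x + (Real.cos x)⁻¹) 0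

/-- The word `σ_1 ⋯ σ_n` extended by the boundary convention `σ_0 = σ_{n+1} = +∞`,
encoded with values in `{0, …, n-1}` and `n` playing the role of `+∞`. -/
def extWord (n : ℕ) (σ : Equiv.Perm (Fin n)) (j : ℕ) : ℕ :=
  if h : 1 ≤ j ∧ j - 1 < n then (σ ⟨j - 1, h.2⟩ : ℕ) else n

/-- number of peaks of `σ` (positions `j ∈ {1,…,n}` with `σ_{j-1} < σ_j > σ_{j+1}`). -/
def pk (n : ℕ) (σ : Equiv.Perm (Fin n)) : ℕ :=
  ((Finset.Icc 1 n).filter (fun j =>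
    extWord n σ (j-1) < extWord n σ j ∧ extWord n σ (j+1) < extWord n σ j)).card

/-- number of valleys of `σ` (positions `j ∈ {1,…,n}` with `σ_{j-1} > σ_j < σ_{j+1}`). -/
def valy (n : ℕ) (σ : Equiv.Perm (Fin n)) : ℕ :=
  ((Finset.Icc 1 n).filter (fun j =>
    extWord n σ j < extWord n σ (j-1) ∧ extWord n σ j < extWord n σ (j+1))).card

/-- number of double ascents of `σ` (positions `j ∈ {1,…,n}` with `σ_{j-1} < σ_j < σ_{j+1}`). -/
def da (n : ℕ) (σ : Equiv.Perm (Fin n)) : ℕ :=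
  ((Finset.Icc 1 n).filter (fun j =>
    extWord n σ (j-1) < extWord n σ j ∧ extWord n σ j < extWord n σ (j+1))).card

/-- number of peaks among positions `j ∈ {2,…,n}`. -/
def pk2 (n : ℕ) (σ : Equiv.Perm (Fin n)) : ℕ :=
  ((Finset.Icc 2 n).filter (fun j =>
    extWord n σ (j-1) < extWord n σ j ∧ extWord n σ (j+1) < extWord n σ j)).card

/-- number of double ascents among positions `j ∈ {2,…,n}`. -/
def da2 (n : ℕ) (σ : Equiv.Perm (Fin n)) : ℕ :=
  ((Finset.Icc 2 n).filter (fun j =>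
    extWord n σ (j-1) < extWord n σ j ∧ extWord n σ j < extWord n σ (j+1))).card

/-- number of ascents of `σ` among positions `1,…,n-1` (`σ_j < σ_{j+1}`). -/
def asc (n : ℕ) (σ : Equiv.Perm (Fin n)) : ℕ :=
  ((Finset.Icc 1 (n-1)).filter (fun j => extWord n σ j < extWord n σ (j+1))).card

/-- number of descents of `σ` among positions `1,…,n-1` (`σ_j > σ_{j+1}`). -/
def des (n : ℕ) (σ : Equiv.Perm (Fin n)) : ℕ :=
  ((Finset.Icc 1 (n-1)).filter (fun j => extWord n σ (j+1) < extWord n σ j)).card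

section Peaks

variable {α : Type*} [LinearOrder α]

/-- Peaks at interior positions only: under the convention `σ_0 = σ_{n+1} = +∞` the first and
last letters are never peaks. -/
def peakCount : List α → ℕ
  | a :: b :: c :: l => (if a < b ∧ c < b then 1 else 0) + peakCount (b :: c :: l)
  | _ => 0

theorem peakCount_cons_of_forall_le {m : α} : ∀ {l : List α}, (∀ x ∈ l, x ≤ m) →
    peakCount (m :: l) = peakCount l
  | [], _ | [_], _ => rfl
  | b :: c :: _, hl => by simp [peakCount, (hl b (by simp)).not_gt]

theorem peakCount_append_singleton_of_forall_le {m : α} :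
    ∀ {l : List α}, (∀ x ∈ l, x ≤ m) → peakCount (l ++ [m]) = peakCount l
  | [], _ | [_], _ => rfl
  | [a, b], hl => by simp [peakCount, (hl b (by simp)).not_gt]
  | a :: b :: c :: l, hl => by
    have ih := peakCount_append_singleton_of_forall_le (m := m) (l := b :: c :: l)
      fun x hx => hl x (.tail a hx)
    simp_all [peakCount]

theorem peakCount_append_cons_of_forall_lt {m : α} {R : List α} (hR : ∀ x ∈ R, x < m) :
    ∀ {L : List α}, (∀ x ∈ L, x < m) →
      peakCount (L ++ m :: R) = peakCount L + peakCount R + if L = [] ∨ R = [] then 0 else 1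
  | [], _ => by simp [peakCount_cons_of_forall_le fun x hx => (hR x hx).le, peakCount]
  | [a], hL => by
    cases R with
    | nil => rfl
    | cons b R =>
      simp [peakCount, peakCount_cons_of_forall_le fun x hx => (hR x hx).le, hL a, hR b]; omega
  | a :: b :: L, hL => by
    have ih := peakCount_append_cons_of_forall_lt hR (L := b :: L) (by simp_all)
    cases L with
    | nil => simp_all [peakCount, (hL b (by simp)).not_gt]
    | cons c L => simp_all [peakCount]; omega

theorem peakCount_eq_card (d : α) : ∀ l : List α, peakCount l = #{i ∈ range (l.length - 2) |
    l.getD i d < l.getD (i + 1) d ∧ l.getD (i + 2) d < l.getD (i + 1) d}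
  | [] | [_] | [_, _] => rfl
  | a :: b :: c :: l => by
    rw [peakCount, peakCount_eq_card d (b :: c :: l), card_filter, card_filter]
    rw [show (a :: b :: c :: l).length - 2 = l.length + 1 by simp, sum_range_succ', add_comm]
    simp

end Peaks

section Arrangements

variable {α : Type*}

def arrangements (s : Finset α) : Finset (List α) :=
  ⟨s.val.lists, Multiset.lists_nodup_finset s⟩

theorem mem_arrangements {s : Finset α} {l : List α} :
    l ∈ arrangements s ↔ (l : Multiset α) = s.val :=
  (Multiset.mem_lists_iff _ _).trans eq_comm

theorem mem_of_mem_arrangements {s : Finset α} {l : List α} (hl : l ∈ arrangements s) {a : α}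
    (ha : a ∈ l) : a ∈ s := by
  rw [← mem_val, ← mem_arrangements.1 hl]
  exact ha

theorem eq_nil_iff_of_mem_arrangements {s : Finset α} {l : List α} (hl : l ∈ arrangements s) :
    l = [] ↔ s = ∅ := by
  rw [← Multiset.coe_eq_zero, mem_arrangements.1 hl, val_eq_zero]

theorem arrangements_empty : arrangements (∅ : Finset α) = {[]} := by
  ext l
  simp [mem_arrangements]

theorem card_arrangements (s : Finset α) : #(arrangements s) = (#s).factorial := by
  change Multiset.card s.val.lists = _
  rw [← s.coe_toList, Multiset.lists_coe, Multiset.coe_card, List.length_permutations,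
    length_toList]

theorem sum_arrangements_insert [DecidableEq α] {M : Type*} [AddCommMonoid M] {m : α}
    {s : Finset α} (hm : m ∉ s) (f : List α → M) :
    ∑ l ∈ arrangements (insert m s), f l = ∑ T ∈ s.powerset, ∑ L ∈ arrangements T,
      ∑ R ∈ arrangements (s \ T), f (L ++ m :: R) := by
  have hval : ∀ L R : List α, ((L ++ m :: R : List α) : Multiset α) = m ::ₘ (L + R) := by
    simp [← Multiset.coe_add, ← Multiset.cons_coe, Multiset.add_cons]
  simp_rw [← sum_product' (f := fun L R => f (L ++ m :: R)), sum_sigma']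
  symm
  refine sum_bij (fun x _ => x.2.1 ++ m :: x.2.2) ?_ ?_ ?_ (fun _ _ => rfl)
  · rintro ⟨T, L, R⟩ hx
    obtain ⟨hT, hL, hR⟩ := by simpa only [mem_sigma, mem_powerset, mem_product] using hx
    rw [mem_arrangements, hval, insert_val_of_notMem hm, mem_arrangements.1 hL,
      mem_arrangements.1 hR, sdiff_val, add_tsub_cancel_of_le (val_le_iff.2 hT)]
  · rintro ⟨T, L, R⟩ hx ⟨T', L', R'⟩ hx' h
    obtain ⟨hT, hL, hR⟩ := by simpa only [mem_sigma, mem_powerset, mem_product] using hx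
    obtain ⟨-, hL', -⟩ := by simpa only [mem_sigma, mem_powerset, mem_product] using hx'
    have hmL : m ∉ L := fun h => hm (hT (mem_of_mem_arrangements hL h))
    have hmR : m ∉ R := fun h => hm (mem_sdiff.1 (mem_of_mem_arrangements hR h)).1
    obtain ⟨rfl, -, rfl⟩ := (List.append_cons_inj_of_notMem hmL hmR).1 h
    obtain rfl : T = T' := val_injective <|
      (mem_arrangements.1 hL).symm.trans (mem_arrangements.1 hL')
    rfl
  · intro l hl
    rw [mem_arrangements, insert_val_of_notMem hm] at hl
    obtain ⟨L, R, rfl⟩ := List.append_of_mem (show m ∈ (l : Multiset α) by simp [hl])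
    rw [hval, Multiset.cons_inj_right] at hl
    have hLs : (L : Multiset α) ≤ s.val := hl ▸ Multiset.le_add_right _ _
    have hLval : L.toFinset.val = L :=
      List.toFinset_val L ▸ Multiset.dedup_eq_self.2 (Multiset.nodup_of_le hLs s.nodup)
    refine ⟨⟨L.toFinset, L, R⟩, ?_, rfl⟩
    simp only [mem_sigma, mem_powerset, mem_product, mem_arrangements, hLval, sdiff_val]
    exact ⟨val_le_iff.1 (hLval ▸ hLs), trivial,
      eq_tsub_of_add_eq ((add_comm (L : Multiset α) R).symm.trans hl)⟩

end Arrangements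

section PeakSum

variable {α : Type*} [LinearOrder α]

def peakSum (s : Finset α) : ℕ := ∑ l ∈ arrangements s, 2 ^ peakCount l

theorem peakSum_empty : peakSum (∅ : Finset α) = 1 := by
  rw [peakSum, arrangements_empty, sum_singleton]
  rfl

theorem peakSum_insert_of_forall_lt {m : α} {s : Finset α} (hs : ∀ x ∈ s, x < m) :
    peakSum (insert m s) = ∑ T ∈ s.powerset,
      (if T = ∅ ∨ s \ T = ∅ then 1 else 2) * peakSum T * peakSum (s \ T) := by
  rw [peakSum, sum_arrangements_insert (fun h => (hs m h).false)]
  refine sum_congr rfl fun T hT => ?_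
  rw [peakSum, peakSum, mul_assoc, sum_mul_sum, mul_sum]
  refine sum_congr rfl fun L hL => ?_
  rw [mul_sum]
  refine sum_congr rfl fun R hR => ?_
  have hLm : ∀ x ∈ L, x < m := fun x hx =>
    hs x (mem_powerset.1 hT (mem_of_mem_arrangements hL hx))
  have hRm : ∀ x ∈ R, x < m := fun x hx =>
    hs x (mem_sdiff.1 (mem_of_mem_arrangements hR hx)).1
  simp only [peakCount_append_cons_of_forall_lt hRm hLm, eq_nil_iff_of_mem_arrangements hL,
    eq_nil_iff_of_mem_arrangements hR, pow_add]
  split_ifs <;> ring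

/-- `peakNum n = P_n(2, 1)` (`sum_two_pow_pk`), given by the recurrence that splitting at the
largest letter produces (`peakSum_eq_peakNum`). -/
def peakNum : ℕ → ℕ
  | 0 => 1
  | n + 1 => ∑ k : Fin (n + 1),
      n.choose k * (if (k : ℕ) = 0 ∨ n - k = 0 then 1 else 2) * peakNum k * peakNum (n - k)

theorem peakNum_succ (n : ℕ) : peakNum (n + 1) = ∑ k ∈ range (n + 1),
    n.choose k * (if k = 0 ∨ n - k = 0 then 1 else 2) * peakNum k * peakNum (n - k) := by
  rw [peakNum, Fin.sum_univ_eq_sum_range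
    (fun k => n.choose k * (if k = 0 ∨ n - k = 0 then 1 else 2) * peakNum k * peakNum (n - k))]

theorem peakSum_eq_peakNum (s : Finset α) :
    peakSum s = peakNum #s := by
  induction hn : #s using Nat.strong_induction_on generalizing s with
  | _ n ih =>
  rcases s.eq_empty_or_nonempty with rfl | hne
  · rw [← hn, card_empty, peakNum, peakSum_empty]
  set s' := s.erase (s.max' hne)
  have hlt : ∀ x ∈ s', x < s.max' hne := fun x hx => lt_max'_of_mem_erase_max' s hne hx
  have hcard : #s' + 1 = n := hn ▸ card_erase_add_one (max'_mem s hne)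
  set g := fun k => (if k = 0 ∨ #s' - k = 0 then 1 else 2) * peakNum k * peakNum (#s' - k)
  calc peakSum s = ∑ T ∈ s'.powerset,
        (if T = ∅ ∨ s' \ T = ∅ then 1 else 2) * peakSum T * peakSum (s' \ T) := by
        rw [← peakSum_insert_of_forall_lt hlt, insert_erase (max'_mem s hne)]
    _ = ∑ T ∈ s'.powerset, g #T := by
        refine sum_congr rfl fun T hT => ?_
        have hsub : #(s' \ T) = #s' - #T := card_sdiff_of_subset (mem_powerset.1 hT)
        have hTs : #T ≤ #s' := card_le_card (mem_powerset.1 hT)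
        rw [ih _ (by omega) T rfl, ih _ (by omega) _ hsub]
        simp only [g, ← hsub, card_eq_zero]
    _ = ∑ k ∈ range (#s' + 1), (#s').choose k • g k := sum_powerset_apply_card g
    _ = peakNum n := by
        rw [← hcard, peakNum_succ]
        simp only [g, smul_eq_mul, mul_assoc]

end PeakSum

section PermWord

variable {n : ℕ}

def permWord (σ : Equiv.Perm (Fin n)) : List ℕ := List.ofFn fun i => (σ i : ℕ)

theorem extWord_eq_getD (σ : Equiv.Perm (Fin n)) (j : ℕ) :
    extWord n σ j = (n :: (permWord σ ++ [n])).getD j n := by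
  rcases j with _ | j
  · simp [extWord]
  · by_cases hj : j < n
    · simp [extWord, hj, permWord, List.getElem?_append_left]
    · simp [extWord, hj, permWord, List.getElem?_append, List.getElem?_cons]
      split_ifs <;> simp

theorem pk_eq_peakCount (σ : Equiv.Perm (Fin n)) : pk n σ = peakCount (permWord σ) := by
  -- padding with the boundary value `n ≥ σ i` on both sides creates no peaks
  have hle : ∀ x ∈ permWord σ, x ≤ n := by simp [permWord, Fin.is_le']
  rw [← peakCount_append_singleton_of_forall_le hle, ← peakCount_cons_of_forall_le (m := n)
    (by simpa [or_imp, forall_and] using hle), peakCount_eq_card n, pk]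
  simp only [extWord_eq_getD]
  set v := n :: (permWord σ ++ [n])
  rw [show v.length - 2 = n by simp [v, permWord]]
  refine card_nbij' (· - 1) (· + 1) ?_ ?_ ?_ ?_ <;> intro j hj <;>
    simp only [coe_filter, mem_Icc, mem_range, Set.mem_ofPred_eq] at hj ⊢
  · rw [show j - 1 + 1 = j by omega, show j - 1 + 2 = j + 1 by omega]
    exact ⟨by omega, hj.2⟩
  · exact ⟨by omega, hj.2⟩
  · omega
  · omega

theorem permWord_injective : Function.Injective (permWord (n := n)) := fun _ _ h =>
  Equiv.ext fun i => Fin.ext (congrFun (List.ofFn_injective h) i)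

theorem permWord_mem_arrangements (σ : Equiv.Perm (Fin n)) :
    permWord σ ∈ arrangements (range n) := by
  have hnd : (permWord σ : Multiset ℕ).Nodup :=
    Multiset.coe_nodup.2 (List.nodup_ofFn.2 fun _ _ h => σ.injective (Fin.ext h))
  rw [mem_arrangements, hnd.ext (range n).nodup]
  intro a
  simp only [Multiset.mem_coe, mem_val, permWord, List.mem_ofFn, mem_range]
  exact ⟨fun ⟨i, hi⟩ => hi ▸ (σ i).isLt, fun ha => ⟨σ.symm ⟨a, ha⟩, by simp⟩⟩

theorem image_permWord : univ.image (permWord (n := n)) = arrangements (range n) := by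
  refine eq_of_subset_of_card_le (image_subset_iff.2 fun σ _ => permWord_mem_arrangements σ) ?_
  rw [card_arrangements, card_range, card_image_of_injective _ permWord_injective, card_univ,
    Fintype.card_perm, Fintype.card_fin]

theorem sum_two_pow_pk : ∑ σ : Equiv.Perm (Fin n), 2 ^ pk n σ = peakNum n := by
  simp_rw [pk_eq_peakCount]
  rw [← sum_image (f := fun l => 2 ^ peakCount l) permWord_injective.injOn, image_permWord]
  simpa [peakSum] using peakSum_eq_peakNum (range n)

end PermWord

section TanSec

open Real Filter Topology

theorem hasDerivAt_tan_add_inv_cos {x : ℝ} (hx : cos x ≠ 0) :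
    HasDerivAt (fun x => tan x + (cos x)⁻¹) ((1 + (tan x + (cos x)⁻¹) ^ 2) / 2) x := by
  refine ((hasDerivAt_tan hx).add ((hasDerivAt_cos x).inv hx)).congr_deriv ?_
  rw [tan_eq_sin_div_cos]
  field_simp
  linear_combination -sin_sq_add_cos_sq x

theorem eulerE_zero : eulerE 0 = 1 := by simp [eulerE]

theorem two_mul_eulerE_succ (n : ℕ) : 2 * eulerE (n + 1) = (if n = 0 then 1 else 0) +
    ∑ k ∈ range (n + 1), n.choose k * eulerE k * eulerE (n - k) := by
  set f := fun x : ℝ => tan x + (cos x)⁻¹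
  have hderiv : deriv f =ᶠ[𝓝 0] fun x => (1 + f x * f x) / 2 := by
    filter_upwards [continuous_cos.continuousAt.eventually_ne (by simp : cos 0 ≠ 0)] with x hx
    rw [(hasDerivAt_tan_add_inv_cos hx).deriv, sq]
  have hf : ContDiffAt ℝ n f 0 :=
    (contDiffAt_tan.2 (by simp)).add (contDiff_cos.contDiffAt.inv (by simp))
  calc 2 * eulerE (n + 1) = 2 * iteratedDeriv n (fun x => (1 + f x * f x) / 2) 0 := by
        rw [eulerE, iteratedDeriv_succ', (hderiv.iteratedDeriv n).eq_of_nhds]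
    _ = iteratedDeriv n (fun x => 1 + f x * f x) 0 := by
        rw [iteratedDeriv_div_const]; ring
    _ = _ := by
        rw [iteratedDeriv_fun_add contDiffAt_const (hf.mul hf), iteratedDeriv_const,
          iteratedDeriv_fun_mul hf hf]
        rfl

end TanSec

theorem two_pow_mul_eulerE (n : ℕ) :
    2 ^ n * eulerE n = (if n = 0 then 1 else 2) * (peakNum n : ℝ) := by
  induction n using Nat.strong_induction_on with
  | _ n ih =>
  rcases n with _ | n
  · simp [eulerE_zero, peakNum]
  have hterm : ∀ k ∈ range (n + 1), 2 ^ n * (n.choose k * eulerE k * eulerE (n - k)) =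
      n.choose k * ((if k = 0 then 1 else 2) * peakNum k) *
        ((if n - k = 0 then 1 else 2) * peakNum (n - k)) := by
    intro k hk
    have hk := mem_range_succ_iff.1 hk
    rw [← ih k (by omega), ← ih (n - k) (by omega), ← Nat.add_sub_cancel' hk, pow_add,
      Nat.add_sub_cancel_left]
    ring
  calc 2 ^ (n + 1) * eulerE (n + 1) = 2 ^ n * (2 * eulerE (n + 1)) := by ring
    _ = 2 ^ n * (if n = 0 then 1 else 0) + ∑ k ∈ range (n + 1), (n.choose k : ℝ) *
          ((if k = 0 then 1 else 2) * peakNum k) *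
            ((if n - k = 0 then 1 else 2) * peakNum (n - k)) := by
        rw [two_mul_eulerE_succ, mul_add, mul_sum, sum_congr rfl hterm]
    _ = 2 * peakNum (n + 1) := by
        rw [peakNum_succ]
        push_cast
        rcases n.eq_zero_or_pos with rfl | hn
        · norm_num [peakNum]
        rw [if_neg hn.ne', mul_zero, zero_add, mul_sum]
        refine sum_congr rfl fun k hk => ?_
        have hk := mem_range_succ_iff.1 hk
        split_ifs <;> first | omega | ring

theorem euler_eq_two_pow_peak (n : ℕ) (hn : 1 ≤ n) :
    eulerE n = (2 : ℝ) ^ ((1 : ℤ) - n) *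
      ∑ σ : Equiv.Perm (Fin n), (2 : ℝ) ^ pk n σ * (1 : ℝ) ^ da n σ := by
  have h := two_pow_mul_eulerE n
  rw [if_neg (by omega)] at h
  have hsum : ∑ σ : Equiv.Perm (Fin n), (2 : ℝ) ^ pk n σ = peakNum n := by
    exact_mod_cast sum_two_pow_pk
  simp only [one_pow, mul_one, hsum, zpow_sub₀ (two_ne_zero' ℝ), zpow_one, zpow_natCast]
  field_simp
  linarith
end

section
/- The Hankel determinants of the sequence of tangent numbers (E_1, E_3, E_5, E_7, ...) are H_n = Π_{k=1}^{2n−1} k!. -/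
open Finset

/-!
The `n`-th derivative of `tan + sec` is `A_n(tan) + B_n(tan) · sec` with `A_0 = X`,
`A_{n+1} = (1 + X²) A_n'`. Hence the coefficient of `X^j` in `A_n` is the total weight of the
`±1`-paths of length `n` from height `1` to height `j` in which a step leaving height `h` has
weight `h`, and at `x = 0` (where `B_n(0) = 0` for odd `n`) the tangent number `E_{2m+1}` is the
weight of such paths from `1` to `0`. Cutting a path of length `2(i + j) + 1` after `2i` steps,
where it sits at an odd height `2k + 1`, factors the Hankel matrix as `U Vᵀ` with `U`, `V` lower
triangular; their diagonal entries are the weights `(2i)!` and `(2j + 1)!` of the monotone paths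
`1 → 2i + 1` and `2j + 1 → 0`.
-/

open Nat

@[to_additive Finset.sum_range_two_mul]
theorem Finset.prod_range_two_mul {M : Type*} [CommMonoid M] (f : ℕ → M) (n : ℕ) :
    ∏ k ∈ range (2 * n), f k = ∏ k ∈ range n, f (2 * k) * f (2 * k + 1) := by
  induction n with
  | zero => simp
  | succ n ih => rw [mul_add_one, prod_range_succ, prod_range_succ, ih, prod_range_succ, mul_assoc]

theorem Nat.prod_range_factorial_eq_prod_Icc (m : ℕ) :
    ∏ k ∈ range m, k ! = ∏ k ∈ Icc 1 (m - 1), k ! := by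
  cases m with
  | zero => rfl
  | succ m => rw [prod_range_succ_factorial, add_tsub_cancel_right, prod_Icc_factorial]

/-- The weight `0` of a step leaving height `0` discards the paths going below `0`, which the
truncated `a - 1` would otherwise count as paths staying at `0`. -/
def pathWeight : ℕ → ℕ → ℕ → ℕ
  | 0, a, b => if a = b then 1 else 0
  | n + 1, a, b => a * (pathWeight n (a + 1) b + pathWeight n (a - 1) b)

theorem pathWeight_zero (a b : ℕ) : pathWeight 0 a b = if a = b then 1 else 0 := rfl

theorem pathWeight_succ (n a b : ℕ) :
    pathWeight (n + 1) a b = a * (pathWeight n (a + 1) b + pathWeight n (a - 1) b) := rfl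

theorem pathWeight_eq_zero_of_lt {n a b : ℕ} (h : a + n < b) : pathWeight n a b = 0 := by
  induction n generalizing a with
  | zero => rw [pathWeight_zero, if_neg (by omega)]
  | succ n ih => rw [pathWeight_succ, ih (by omega), ih (by omega), add_zero, mul_zero]

theorem pathWeight_eq_zero_of_gt {n a b : ℕ} (h : b + n < a) : pathWeight n a b = 0 := by
  induction n generalizing a with
  | zero => rw [pathWeight_zero, if_neg (by omega)]
  | succ n ih => rw [pathWeight_succ, ih (by omega), ih (by omega), add_zero, mul_zero]

theorem pathWeight_eq_zero_of_mod_two_ne {n a b : ℕ} (h : (a + n) % 2 ≠ b % 2) :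
    pathWeight n a b = 0 := by
  induction n generalizing a with
  | zero => rw [pathWeight_zero, if_neg (by omega)]
  | succ n ih =>
    rcases Nat.eq_zero_or_pos a with rfl | ha
    · rw [pathWeight_succ, zero_mul]
    · rw [pathWeight_succ, ih (by omega), ih (by omega), add_zero, mul_zero]

theorem pathWeight_succ_right (n a b : ℕ) :
    pathWeight (n + 1) a b =
      (b + 1) * pathWeight n a (b + 1) + (b - 1) * pathWeight n a (b - 1) := by
  induction n generalizing a with
  | zero =>
    simp only [pathWeight_succ, pathWeight_zero]
    split_ifs <;> omega
  | succ n ih =>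
    rw [pathWeight_succ, ih, ih, pathWeight_succ n a, pathWeight_succ n a]
    ring

theorem pathWeight_add_eq_sum (m n : ℕ) {a N : ℕ} (b : ℕ) (hN : a + m < N) :
    pathWeight (m + n) a b = ∑ k ∈ range N, pathWeight m a k * pathWeight n k b := by
  induction m generalizing a with
  | zero =>
    rw [zero_add, sum_eq_single_of_mem a (mem_range.2 (by omega))
      fun k _ hk => by rw [pathWeight_zero, if_neg (Ne.symm hk), zero_mul]]
    rw [pathWeight_zero, if_pos rfl, one_mul]
  | succ m ih =>
    rw [add_right_comm, pathWeight_succ, ih (by omega), ih (by omega), ← sum_add_distrib, mul_sum]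
    refine sum_congr rfl fun k _ => ?_
    rw [pathWeight_succ]
    ring

theorem pathWeight_self_add (n a : ℕ) : pathWeight n a (a + n) = a.ascFactorial n := by
  induction n with
  | zero => rw [pathWeight_zero, if_pos (add_zero a).symm, ascFactorial_zero]
  | succ n ih =>
    rw [pathWeight_succ_right, pathWeight_eq_zero_of_lt (by omega), ← add_assoc,
      Nat.add_sub_cancel, ih, ascFactorial_succ]
    ring

theorem pathWeight_add_self (n b : ℕ) : pathWeight n (b + n) b = (b + n).descFactorial n := by
  induction n with
  | zero => rw [pathWeight_zero, if_pos (add_zero b), descFactorial_zero]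
  | succ n ih =>
    rw [pathWeight_succ, pathWeight_eq_zero_of_gt (by omega), ← add_assoc, Nat.add_sub_cancel, ih,
      zero_add, succ_descFactorial_succ]

theorem pathWeight_hankel_entry {n i : ℕ} (j : ℕ) (hi : i < n) :
    pathWeight (2 * (i + j) + 1) 1 0 =
      ∑ k ∈ range n,
        pathWeight (2 * i) 1 (2 * k + 1) * pathWeight (2 * j + 1) (2 * k + 1) 0 := by
  rw [show 2 * (i + j) + 1 = 2 * i + (2 * j + 1) by ring,
    pathWeight_add_eq_sum _ _ _ (show 1 + 2 * i < 2 * n by omega), sum_range_two_mul]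
  refine sum_congr rfl fun k _ => ?_
  rw [pathWeight_eq_zero_of_mod_two_ne (by omega), zero_mul, zero_add]

open Matrix in
theorem det_pathWeight_hankel (n : ℕ) :
    det (of fun i j : Fin n => (pathWeight (2 * ((i : ℕ) + j) + 1) 1 0 : ℝ)) =
      ∏ k ∈ Icc 1 (2 * n - 1), (k ! : ℝ) := by
  let U : Matrix (Fin n) (Fin n) ℝ := of fun i k => (pathWeight (2 * i) 1 (2 * k + 1) : ℝ)
  let V : Matrix (Fin n) (Fin n) ℝ := of fun j k => (pathWeight (2 * j + 1) (2 * k + 1) 0 : ℝ)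
  have hUV :
      of (fun i j : Fin n => (pathWeight (2 * ((i : ℕ) + j) + 1) 1 0 : ℝ)) = U * Vᵀ := by
    ext i j
    rw [of_apply, pathWeight_hankel_entry j i.isLt, ← Fin.sum_univ_eq_sum_range]
    simp [mul_apply, U, V]
  have hU : det U = ∏ i : Fin n, ((2 * i : ℕ) ! : ℝ) := by
    rw [det_of_isLowerTriangular U fun i k (hik : i < k) => by
      simp [U, pathWeight_eq_zero_of_lt (show 1 + 2 * (i : ℕ) < 2 * k + 1 by omega)]]
    refine prod_congr rfl fun i _ => ?_
    simp [U, add_comm _ 1, pathWeight_self_add, one_ascFactorial]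
  have hV : det V = ∏ j : Fin n, ((2 * j + 1 : ℕ) ! : ℝ) := by
    rw [det_of_isLowerTriangular V fun j k (hjk : j < k) => by
      simp [V, pathWeight_eq_zero_of_gt (show 0 + (2 * (j : ℕ) + 1) < 2 * k + 1 by omega)]]
    refine prod_congr rfl fun j _ => ?_
    have hdiag := pathWeight_add_self (2 * j + 1) 0
    rw [zero_add, descFactorial_self] at hdiag
    simp [V, hdiag]
  rw [hUV, det_mul, det_transpose, hU, hV, ← prod_mul_distrib,
    Fin.prod_univ_eq_prod_range (fun i => ((2 * i) ! : ℝ) * (2 * i + 1) !),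
    ← prod_range_two_mul fun k => (k ! : ℝ)]
  exact_mod_cast prod_range_factorial_eq_prod_Icc (2 * n)

open Polynomial

theorem Polynomial.coeff_one_add_X_sq_mul_derivative {R : Type*} [Semiring R] (q : R[X]) (j : ℕ) :
    ((1 + X ^ 2) * derivative q).coeff j =
      q.coeff (j + 1) * (j + 1) + q.coeff (j - 1) * (j - 1 : ℕ) := by
  rw [add_mul, one_mul, coeff_add, coeff_X_pow_mul', coeff_derivative]
  congr 1
  split_ifs with h
  · obtain ⟨i, rfl⟩ := Nat.exists_eq_add_of_le' h
    simp [coeff_derivative]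
  · rw [show j - 1 = 0 by omega, Nat.cast_zero, mul_zero]

noncomputable def tanPoly : ℕ → ℝ[X]
  | 0 => X
  | n + 1 => (1 + X ^ 2) * derivative (tanPoly n)

noncomputable def secPoly : ℕ → ℝ[X]
  | 0 => 1
  | n + 1 => (1 + X ^ 2) * derivative (secPoly n) + X * secPoly n

theorem tanPoly_coeff (n j : ℕ) : (tanPoly n).coeff j = pathWeight n 1 j := by
  induction n generalizing j with
  | zero =>
    rw [tanPoly, coeff_X, pathWeight_zero]
    split_ifs <;> simp
  | succ n ih =>
    rw [tanPoly, coeff_one_add_X_sq_mul_derivative, ih, ih, pathWeight_succ_right]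
    push_cast
    ring

theorem secPoly_coeff_eq_zero {n j : ℕ} (h : (j + n) % 2 = 1) : (secPoly n).coeff j = 0 := by
  induction n generalizing j with
  | zero => rw [secPoly, coeff_one, if_neg (by omega)]
  | succ n ih =>
    rw [secPoly, coeff_add, coeff_one_add_X_sq_mul_derivative, ih (by omega)]
    cases j with
    | zero => simp
    | succ j =>
      rw [coeff_X_mul, Nat.add_sub_cancel, ih (by omega)]
      simp

theorem hasDerivAt_eval_tan_add_eval_tan_mul_sec (P Q : ℝ[X]) {x : ℝ} (hx : Real.cos x ≠ 0) :
    HasDerivAt (fun y => P.eval (Real.tan y) + Q.eval (Real.tan y) * (Real.cos y)⁻¹)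
      (((1 + X ^ 2) * derivative P).eval (Real.tan x) +
        ((1 + X ^ 2) * derivative Q + X * Q).eval (Real.tan x) * (Real.cos x)⁻¹) x := by
  have htan := Real.hasDerivAt_tan hx
  have hP := (P.hasDerivAt (Real.tan x)).comp x htan
  have hQ := (Q.hasDerivAt (Real.tan x)).comp x htan
  have hsec := (Real.hasDerivAt_cos x).inv hx
  refine (hP.add (hQ.mul hsec)).congr_deriv ?_
  have h1 : 1 + Real.tan x ^ 2 = (Real.cos x ^ 2)⁻¹ := by
    rw [← Real.inv_one_add_tan_sq hx, inv_inv]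
  simp only [eval_mul, eval_add, eval_one, eval_pow, eval_X, h1, Function.comp_def, Pi.inv_apply]
  rw [Real.tan_eq_sin_div_cos]
  field_simp

theorem iteratedDeriv_tan_add_sec (n : ℕ) {x : ℝ} (hx : Real.cos x ≠ 0) :
    iteratedDeriv n (fun y => Real.tan y + (Real.cos y)⁻¹) x =
      (tanPoly n).eval (Real.tan x) + (secPoly n).eval (Real.tan x) * (Real.cos x)⁻¹ := by
  induction n generalizing x with
  | zero => simp [tanPoly, secPoly]
  | succ n ih =>
    have hcos : {y : ℝ | Real.cos y ≠ 0} ∈ nhds x :=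
      (isOpen_ne_fun Real.continuous_cos continuous_const).mem_nhds hx
    rw [iteratedDeriv_succ, (Filter.eventuallyEq_of_mem hcos fun y hy => ih hy).deriv_eq,
      (hasDerivAt_eval_tan_add_eval_tan_mul_sec _ _ hx).deriv, tanPoly, secPoly]

theorem eulerE_two_mul_add_one (m : ℕ) : eulerE (2 * m + 1) = pathWeight (2 * m + 1) 1 0 := by
  rw [eulerE, iteratedDeriv_tan_add_sec _ (by simp), Real.tan_zero, ← coeff_zero_eq_eval_zero,
    ← coeff_zero_eq_eval_zero, tanPoly_coeff, secPoly_coeff_eq_zero (by omega), zero_mul,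
    add_zero]

theorem hankel_tangent (n : ℕ) :
    Matrix.det (fun i j : Fin n => eulerE (2 * ((i : ℕ) + (j : ℕ)) + 1))
      = ∏ k ∈ Finset.Icc 1 (2*n-1), (Nat.factorial (k) : ℝ) := by
  rw [← det_pathWeight_hankel n]
  exact congrArg Matrix.det (funext₂ fun _ _ => eulerE_two_mul_add_one _)
end

section
/- The Hankel determinants of the sequence (E_3, E_5, E_7, ...) are H_n = Π_{k=1}^{2n} k!. -/
open Finset

open Polynomial

/-!
Put `v = (1 - sin θ)⁻¹`. Then `(tan + sec)' = v`, and `(d/dθ)²` maps `P(v)` to `Q(v)` with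
`Q = secondDerivOp P`, so `E_{2m+3}` is the value at `1` of `secondDerivOp^{m+1} X`. Under the
rising moments `P ↦ (Σ_k p_k k(k+1)⋯(k+2i-1))_i`, `secondDerivOp` becomes the shift
`f ↦ f(i+1) - 4i² f(i)`, which acts tridiagonally on the explicit family `tangentBasis`. Hence
`E_{2m+3} = 2 a_{m,0}` for the Motzkin-path array `a` whose weights are read off from that
tridiagonal action (a Jacobi continued fraction for the sequence). For such an array
`Σ_k a_{i,k} a_{j,k} μ_k = μ_0 a_{i+j,0}`, with weights `μ` that make the tridiagonal matrix
symmetric, so the Hankel matrix is `L D Lᵀ` with `L = (a_{i,k})` lower triangular and its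
determinant is `∏_k a_{k,k}² μ_k = ∏_k (2k+1)! (2k+2)!`.
-/

section MotzkinArray

variable {R : Type*} [CommRing R] (u b d : ℕ → R)

/-- `motzkinArray u b d m k` is the total weight of the Motzkin paths of length `m` from height `0`
to height `k`, where a step up from height `j` weighs `u j`, a level step at height `j` weighs
`b j` and a step down from height `j + 1` weighs `d (j + 1)`. -/
def motzkinArray : ℕ → ℕ → R
  | 0, k => if k = 0 then 1 else 0
  | m + 1, 0 => b 0 * motzkinArray m 0 + d 1 * motzkinArray m 1
  | m + 1, k + 1 =>
    u k * motzkinArray m k + b (k + 1) * motzkinArray m (k + 1) + d (k + 2) * motzkinArray m (k + 2)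

theorem motzkinArray_eq_zero_of_lt : ∀ {m k : ℕ}, m < k → motzkinArray u b d m k = 0
  | 0, _ + 1, _ => rfl
  | m + 1, k + 1, h => by
    simp only [motzkinArray, motzkinArray_eq_zero_of_lt (m := m) (k := k) (by omega),
      motzkinArray_eq_zero_of_lt (m := m) (k := k + 1) (by omega),
      motzkinArray_eq_zero_of_lt (m := m) (k := k + 2) (by omega), mul_zero, add_zero]

theorem motzkinArray_self (k : ℕ) : motzkinArray u b d k k = ∏ j ∈ range k, u j := by
  induction k with
  | zero => rfl
  | succ k ih =>
    simp only [motzkinArray, ih, prod_range_succ,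
      motzkinArray_eq_zero_of_lt u b d (Nat.lt_succ_self k),
      motzkinArray_eq_zero_of_lt u b d (show k < k + 2 by omega)]
    ring

variable {u b d}

theorem apply_pow_eq_motzkinArray {M : Type*} [AddCommMonoid M] [Module R M]
    (Δ : Module.End R M) (ev : M →ₗ[R] R) (ψ : ℕ → M)
    (hψ_zero : Δ (ψ 0) = b 0 • ψ 0 + d 1 • ψ 1)
    (hψ_succ : ∀ k,
      Δ (ψ (k + 1)) = u k • ψ k + b (k + 1) • ψ (k + 1) + d (k + 2) • ψ (k + 2))
    (hev : ∀ k, ev (ψ k) = if k = 0 then 1 else 0) (m k : ℕ) :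
    ev ((Δ ^ m) (ψ k)) = motzkinArray u b d m k := by
  induction m generalizing k with
  | zero => exact hev k
  | succ m ih =>
    rw [pow_succ, Module.End.mul_apply]
    cases k with
    | zero => simp only [hψ_zero, map_add, map_smul, ih, smul_eq_mul, motzkinArray]
    | succ k => simp only [hψ_succ, map_add, map_smul, ih, smul_eq_mul, motzkinArray]

variable {μ : ℕ → R} (hμ : ∀ k, u k * μ (k + 1) = d (k + 1) * μ k)
include hμ

/-- The right-hand side is symmetric in `i` and `j`. -/
theorem sum_motzkinArray_succ_mul {i j K : ℕ} (hj : j ≤ K) :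
    ∑ k ∈ range (K + 1), motzkinArray u b d (i + 1) k * motzkinArray u b d j k * μ k =
      ∑ k ∈ range (K + 1),
        (u k * μ (k + 1) * motzkinArray u b d i k * motzkinArray u b d j (k + 1) +
          u k * μ (k + 1) * motzkinArray u b d i (k + 1) * motzkinArray u b d j k +
          b k * μ k * motzkinArray u b d i k * motzkinArray u b d j k) := by
  set a := motzkinArray u b d with ha
  have hstep (k : ℕ) : a (i + 1) (k + 1) * a j (k + 1) * μ (k + 1) =
      u k * μ (k + 1) * a i k * a j (k + 1) +
        u (k + 1) * μ (k + 1 + 1) * a i (k + 1 + 1) * a j (k + 1) +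
        b (k + 1) * μ (k + 1) * a i (k + 1) * a j (k + 1) := by
    simp only [ha, motzkinArray]
    linear_combination (-(a i (k + 2) * a j (k + 1))) * hμ (k + 1)
  have hzero : a (i + 1) 0 * a j 0 * μ 0 =
      u 0 * μ (0 + 1) * a i (0 + 1) * a j 0 + b 0 * μ 0 * a i 0 * a j 0 := by
    simp only [ha, motzkinArray]
    linear_combination (-(a i 1 * a j 0)) * hμ 0
  have hjK : a j (K + 1) = 0 := motzkinArray_eq_zero_of_lt u b d (by omega)
  rw [sum_range_succ', sum_congr rfl fun k _ => hstep k, hzero]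
  simp only [sum_add_distrib]
  rw [sum_range_succ (fun k => u k * μ (k + 1) * a i k * a j (k + 1)),
    sum_range_succ' (fun k => u k * μ (k + 1) * a i (k + 1) * a j k),
    sum_range_succ' (fun k => b k * μ k * a i k * a j k), hjK]
  ring

theorem sum_motzkinArray_mul_motzkinArray {i j K : ℕ} (h : i + j < K) :
    ∑ k ∈ range K, motzkinArray u b d i k * motzkinArray u b d j k * μ k =
      μ 0 * motzkinArray u b d (i + j) 0 := by
  induction i generalizing j with
  | zero =>
    rw [sum_eq_single_of_mem 0 (mem_range.2 (by omega)) fun k _ hk => by simp [motzkinArray, hk]]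
    simp only [motzkinArray, if_true, zero_add]
    ring
  | succ i ih =>
    obtain ⟨K, rfl⟩ : ∃ K', K = K' + 1 := ⟨K - 1, by omega⟩
    calc ∑ k ∈ range (K + 1), motzkinArray u b d (i + 1) k * motzkinArray u b d j k * μ k
        = ∑ k ∈ range (K + 1),
            motzkinArray u b d (j + 1) k * motzkinArray u b d i k * μ k := by
          rw [sum_motzkinArray_succ_mul hμ (by omega), sum_motzkinArray_succ_mul hμ (by omega)]
          exact sum_congr rfl fun k _ => by ring
      _ = ∑ k ∈ range (K + 1), motzkinArray u b d i k * motzkinArray u b d (j + 1) k * μ k :=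
          sum_congr rfl fun k _ => by ring
      _ = μ 0 * motzkinArray u b d (i + 1 + j) 0 := by
          rw [ih (by omega), Nat.add_right_comm, Nat.add_assoc]

theorem det_hankel_motzkinArray (n : ℕ) :
    (Matrix.of fun i j : Fin n => μ 0 * motzkinArray u b d (i + j) 0).det =
      ∏ k ∈ range n, (∏ j ∈ range k, u j) ^ 2 * μ k := by
  set L : Matrix (Fin n) (Fin n) R := Matrix.of fun i k => motzkinArray u b d i k
  have hfactor : (Matrix.of fun i j : Fin n => μ 0 * motzkinArray u b d (i + j) 0) =
      L * Matrix.diagonal (fun k : Fin n => μ k) * L.transpose := by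
    ext i j
    rw [Matrix.mul_apply]
    simp only [L, Matrix.mul_diagonal, Matrix.of_apply, Matrix.transpose_apply]
    symm
    rw [Fin.sum_univ_eq_sum_range (fun k => motzkinArray u b d i k * μ k * motzkinArray u b d j k),
      ← sum_motzkinArray_mul_motzkinArray hμ (K := i + j + n) (by omega)]
    refine sum_subset (range_subset_range.2 (by omega)) (fun k _ hk => ?_) |>.trans
      (sum_congr rfl fun k _ => by ring)
    rw [motzkinArray_eq_zero_of_lt u b d (show (i : ℕ) < k by simp at hk; omega)]
    ring
  have hL : L.det = ∏ k ∈ range n, ∏ j ∈ range k, u j := by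
    rw [Matrix.det_of_isLowerTriangular L fun i k hik => motzkinArray_eq_zero_of_lt u b d hik,
      ← Fin.prod_univ_eq_prod_range]
    exact prod_congr rfl fun k _ => motzkinArray_self u b d k
  rw [hfactor, Matrix.det_mul, Matrix.det_mul, Matrix.det_transpose, Matrix.det_diagonal, hL,
    Fin.prod_univ_eq_prod_range (fun k => μ k), ← prod_mul_distrib, ← prod_mul_distrib]
  exact prod_congr rfl fun k _ => by ring

end MotzkinArray

section PolynomialOperators

variable {R : Type*} [CommRing R]

noncomputable def eulerDeriv : R[X] →ₗ[R] R[X] := LinearMap.mulLeft R X ∘ₗ derivative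

theorem eulerDeriv_monomial (k : ℕ) (c : R) : eulerDeriv (monomial k c) = monomial k (k * c) := by
  cases k with
  | zero => simp [eulerDeriv]
  | succ k => simp [eulerDeriv, X_mul_monomial, mul_comm]

/-- `(d/dθ)²` acting on `P((1 - sin θ)⁻¹)`. -/
noncomputable def secondDerivOp : R[X] →ₗ[R] R[X] :=
  LinearMap.mulLeft R (2 * X - 1) ∘ₗ eulerDeriv ∘ₗ eulerDeriv +
    LinearMap.mulLeft R X ∘ₗ eulerDeriv

theorem secondDerivOp_monomial (k : ℕ) (c : R) :
    secondDerivOp (monomial k c) =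
      monomial (k + 1) (k * (2 * k + 1) * c) - monomial k (k ^ 2 * c) := by
  simp only [secondDerivOp, LinearMap.add_apply, LinearMap.comp_apply, LinearMap.mulLeft_apply,
    eulerDeriv_monomial, sub_mul, one_mul, mul_assoc, X_mul_monomial]
  ext n
  simp only [coeff_add, coeff_sub, coeff_monomial, coeff_ofNat_mul]
  split_ifs <;> ring

/-- `p ↦ Σ_k p_k k (k + 1) ⋯ (k + r - 1)` -/
noncomputable def risingMoment (r : ℕ) : R[X] →ₗ[R] R :=
  lsum fun k => LinearMap.toSpanSingleton R R (k.ascFactorial r)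

theorem risingMoment_monomial (r k : ℕ) (c : R) :
    risingMoment r (monomial k c) = c * k.ascFactorial r := by
  simp [risingMoment]

theorem risingMoment_zero : (risingMoment 0 : R[X] →ₗ[R] R) = leval 1 :=
  lhom_ext' fun k => LinearMap.ext fun c => by simp [risingMoment_monomial]

theorem risingMoment_comp_secondDerivOp (r : ℕ) :
    (risingMoment r : R[X] →ₗ[R] R) ∘ₗ secondDerivOp =
      risingMoment (r + 2) - (r ^ 2 : R) • risingMoment r :=
  lhom_ext' fun k => LinearMap.ext fun c => by
    have h := congrArg (Nat.cast (R := R)) (Nat.succ_ascFactorial k r)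
    push_cast at h
    simp only [LinearMap.comp_apply, secondDerivOp_monomial, map_sub, risingMoment_monomial,
      LinearMap.sub_apply, LinearMap.smul_apply, smul_eq_mul, Nat.ascFactorial_succ]
    push_cast
    linear_combination c * (2 * (k : R) + 1) * h

end PolynomialOperators

section TangentMoments

variable {R : Type*} [CommRing R]

noncomputable def evenRisingMoments : R[X] →ₗ[R] ℕ → R :=
  LinearMap.pi fun i => risingMoment (2 * i)

def momentShift : (ℕ → R) →ₗ[R] ℕ → R :=
  LinearMap.pi fun i => LinearMap.proj (i + 1) - (4 * (i : R) ^ 2) • LinearMap.proj i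

theorem momentShift_comp_evenRisingMoments :
    (momentShift : Module.End R (ℕ → R)) ∘ₗ evenRisingMoments =
      evenRisingMoments ∘ₗ secondDerivOp := by
  refine LinearMap.ext fun P => funext fun i => ?_
  have h := LinearMap.congr_fun (risingMoment_comp_secondDerivOp (R := R) (2 * i)) P
  simp only [LinearMap.comp_apply, LinearMap.sub_apply, LinearMap.smul_apply] at h
  simp only [momentShift, evenRisingMoments, LinearMap.comp_apply, LinearMap.pi_apply,
    LinearMap.sub_apply, LinearMap.smul_apply, LinearMap.proj_apply, h, smul_eq_mul, mul_add,
    mul_one]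
  push_cast
  ring

theorem evenRisingMoments_apply_zero (P : R[X]) : evenRisingMoments P 0 = P.eval 1 := by
  rw [evenRisingMoments, LinearMap.pi_apply, mul_zero, risingMoment_zero, leval_apply]

noncomputable def tangentBasis (k i : ℕ) : R :=
  (2 * i).factorial * (descPochhammer R k).eval (i : R) * ((2 * k + 3) * i + 1)

def tangentUp (k : ℕ) : R := (2 * k + 2) * (2 * k + 3) * (k + 2)

def tangentMotzkinArray : ℕ → ℕ → R :=
  motzkinArray tangentUp (fun k => 8 * (k + 1) ^ 2) (fun k => 2 * (2 * k + 1))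

theorem descPochhammer_succ_eval_add_one (k : ℕ) (x : R) :
    (descPochhammer R (k + 1)).eval (x + 1) = (x + 1) * (descPochhammer R k).eval x := by
  simp [descPochhammer_succ_left]

theorem tangentBasis_apply_zero (k : ℕ) :
    tangentBasis k 0 = if k = 0 then (1 : R) else 0 := by
  simp [tangentBasis, descPochhammer_eval_zero]

theorem factorial_two_mul_add_two (i : ℕ) :
    ((2 * (i + 1)).factorial : R) = (2 * i + 2) * (2 * i + 1) * (2 * i).factorial := by
  rw [show 2 * (i + 1) = 2 * i + 1 + 1 by ring, Nat.factorial_succ, Nat.factorial_succ]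
  push_cast
  ring

theorem momentShift_tangentBasis_zero :
    (momentShift : Module.End R (ℕ → R)) (tangentBasis 0) =
      (8 : R) • tangentBasis 0 + (6 : R) • tangentBasis 1 := by
  funext i
  simp only [momentShift, tangentBasis, LinearMap.pi_apply, LinearMap.sub_apply,
    LinearMap.smul_apply, LinearMap.proj_apply, Pi.add_apply, Pi.smul_apply, smul_eq_mul,
    descPochhammer_zero, descPochhammer_one, eval_one, eval_X, factorial_two_mul_add_two]
  push_cast
  ring

theorem momentShift_tangentBasis_succ (k : ℕ) :
    (momentShift : Module.End R (ℕ → R)) (tangentBasis (k + 1)) =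
      (tangentUp k : R) • tangentBasis k +
        (8 * (k + 2) ^ 2 : R) • tangentBasis (k + 1) +
        (2 * (2 * k + 5) : R) • tangentBasis (k + 2) := by
  funext i
  simp only [momentShift, tangentBasis, LinearMap.pi_apply, LinearMap.sub_apply,
    LinearMap.smul_apply, LinearMap.proj_apply, Pi.add_apply, Pi.smul_apply, smul_eq_mul,
    factorial_two_mul_add_two, Nat.cast_succ, descPochhammer_succ_eval_add_one, tangentUp]
  simp only [descPochhammer_succ_eval]
  push_cast
  ring

theorem momentShift_pow_tangentBasis_apply_zero (m k : ℕ) :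
    (momentShift ^ m) (tangentBasis k) 0 = (tangentMotzkinArray m k : R) := by
  unfold tangentMotzkinArray
  refine apply_pow_eq_motzkinArray momentShift (LinearMap.proj (R := R) (φ := fun _ => R) 0)
    tangentBasis ?_ ?_ tangentBasis_apply_zero m k
  · convert momentShift_tangentBasis_zero (R := R) using 3 <;> norm_num
  · intro k
    convert momentShift_tangentBasis_succ (R := R) k using 4 <;> push_cast <;> ring

theorem evenRisingMoments_secondDerivOp_X :
    evenRisingMoments (secondDerivOp (X : R[X])) = (2 : R) • tangentBasis 0 := by
  funext i
  have h := Nat.factorial_mul_ascFactorial 1 (2 * i)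
  rw [Nat.factorial_one, one_mul, Nat.add_comm 1 (2 * i), Nat.factorial_succ] at h
  rw [← monomial_one_one_eq_X, secondDerivOp_monomial]
  simp only [evenRisingMoments, LinearMap.pi_apply, map_sub, risingMoment_monomial,
    Nat.one_ascFactorial, tangentBasis, descPochhammer_zero, eval_one, Pi.smul_apply, smul_eq_mul]
  rw [h]
  push_cast
  ring

end TangentMoments

section Analysis

open Real

noncomputable def invOneSubSin (θ : ℝ) : ℝ := (1 - sin θ)⁻¹

variable {θ : ℝ}

theorem one_sub_sin_ne_zero (hθ : cos θ ≠ 0) : 1 - sin θ ≠ 0 := by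
  have h : (1 - sin θ) * (1 + sin θ) = cos θ ^ 2 := by rw [cos_sq']; ring
  exact left_ne_zero_of_mul (h ▸ pow_ne_zero 2 hθ)

theorem sq_cos_mul_invOneSubSin (hθ : cos θ ≠ 0) :
    (cos θ * invOneSubSin θ) ^ 2 = 2 * invOneSubSin θ - 1 := by
  have := one_sub_sin_ne_zero hθ
  rw [invOneSubSin, mul_pow, cos_sq']
  field_simp
  ring

theorem hasDerivAt_invOneSubSin (hθ : cos θ ≠ 0) :
    HasDerivAt invOneSubSin (cos θ * invOneSubSin θ ^ 2) θ :=
  (((hasDerivAt_sin θ).const_sub 1).inv (one_sub_sin_ne_zero hθ)).congr_deriv (by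
    rw [invOneSubSin, inv_pow, neg_neg, div_eq_mul_inv])

theorem hasDerivAt_cos_mul_invOneSubSin (hθ : cos θ ≠ 0) :
    HasDerivAt (fun t => cos t * invOneSubSin t) (invOneSubSin θ) θ :=
  ((hasDerivAt_cos θ).fun_mul (hasDerivAt_invOneSubSin hθ)).congr_deriv (by
    have := one_sub_sin_ne_zero hθ
    rw [invOneSubSin]
    field_simp
    linear_combination sin_sq_add_cos_sq θ)

theorem hasDerivAt_eval_invOneSubSin (P : ℝ[X]) (hθ : cos θ ≠ 0) :
    HasDerivAt (fun t => P.eval (invOneSubSin t))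
      ((eulerDeriv P).eval (invOneSubSin θ) * (cos θ * invOneSubSin θ)) θ :=
  ((P.hasDerivAt _).comp θ (hasDerivAt_invOneSubSin hθ)).congr_deriv (by
    simp only [eulerDeriv, LinearMap.comp_apply, LinearMap.mulLeft_apply, eval_mul, eval_X]
    ring)

theorem isOpen_cos_ne_zero : IsOpen {θ : ℝ | cos θ ≠ 0} :=
  isOpen_ne_fun continuous_cos continuous_const

theorem deriv_deriv_eval_invOneSubSin (P : ℝ[X]) (hθ : cos θ ≠ 0) :
    deriv (deriv fun t => P.eval (invOneSubSin t)) θ =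
      (secondDerivOp P).eval (invOneSubSin θ) := by
  have hderiv : deriv (fun t => P.eval (invOneSubSin t)) =ᶠ[nhds θ]
      fun t => (eulerDeriv P).eval (invOneSubSin t) * (cos t * invOneSubSin t) := by
    filter_upwards [isOpen_cos_ne_zero.mem_nhds hθ] with t ht
    exact (hasDerivAt_eval_invOneSubSin P ht).deriv
  rw [hderiv.deriv_eq, ((hasDerivAt_eval_invOneSubSin _ hθ).fun_mul
    (hasDerivAt_cos_mul_invOneSubSin hθ)).deriv]
  have hsq := sq_cos_mul_invOneSubSin hθ
  simp only [secondDerivOp, LinearMap.add_apply, LinearMap.comp_apply, LinearMap.mulLeft_apply,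
    eval_add, eval_mul, eval_sub, eval_ofNat, eval_X, eval_one]
  linear_combination (eval (invOneSubSin θ) (eulerDeriv (eulerDeriv P))) * hsq

theorem iteratedDeriv_two_mul_eval_invOneSubSin (m : ℕ) (P : ℝ[X]) (hθ : cos θ ≠ 0) :
    iteratedDeriv (2 * m) (fun t => P.eval (invOneSubSin t)) θ =
      ((secondDerivOp ^ m) P).eval (invOneSubSin θ) := by
  induction m generalizing P with
  | zero => simp
  | succ m ih =>
    have hD2 : Set.EqOn (deriv (deriv fun t => P.eval (invOneSubSin t)))
        (fun t => (secondDerivOp P).eval (invOneSubSin t)) {t | cos t ≠ 0} :=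
      fun t ht => deriv_deriv_eval_invOneSubSin P ht
    rw [show 2 * (m + 1) = 2 * m + 1 + 1 by ring, iteratedDeriv_succ', iteratedDeriv_succ',
      hD2.iteratedDeriv_of_isOpen isOpen_cos_ne_zero _ hθ, ih, pow_succ, Module.End.mul_apply]

theorem deriv_tan_add_inv_cos (hθ : cos θ ≠ 0) :
    deriv (fun x => tan x + (cos x)⁻¹) θ = invOneSubSin θ := by
  have := one_sub_sin_ne_zero hθ
  have hsec : HasDerivAt (fun x => (cos x)⁻¹) (sin θ / cos θ ^ 2) θ :=
    ((hasDerivAt_cos θ).inv hθ).congr_deriv (by ring)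
  rw [((hasDerivAt_tan hθ).fun_add hsec).deriv, invOneSubSin]
  field_simp
  linear_combination -sin_sq_add_cos_sq θ

theorem eulerE_two_mul_add_three (m : ℕ) :
    eulerE (2 * m + 3) = ((secondDerivOp ^ (m + 1)) X).eval 1 := by
  have hderiv : Set.EqOn (deriv fun x => tan x + (cos x)⁻¹)
      (fun t => (X : ℝ[X]).eval (invOneSubSin t)) {t | cos t ≠ 0} :=
    fun t ht => by simpa using deriv_tan_add_inv_cos ht
  have h0 : cos (0 : ℝ) ≠ 0 := by simp
  rw [eulerE, show 2 * m + 3 = 2 * (m + 1) + 1 by ring, iteratedDeriv_succ',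
    hderiv.iteratedDeriv_of_isOpen isOpen_cos_ne_zero _ h0,
    iteratedDeriv_two_mul_eval_invOneSubSin _ _ h0]
  simp [invOneSubSin]

end Analysis

theorem eulerE_eq_two_mul_tangentMotzkinArray (m : ℕ) :
    eulerE (2 * m + 3) = 2 * tangentMotzkinArray m 0 := by
  rw [eulerE_two_mul_add_three, ← evenRisingMoments_apply_zero, pow_succ, Module.End.mul_apply,
    ← LinearMap.comp_apply, ← Module.End.commute_pow_left_of_commute
      momentShift_comp_evenRisingMoments, LinearMap.comp_apply, evenRisingMoments_secondDerivOp_X,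
    map_smul, Pi.smul_apply, momentShift_pow_tangentBasis_apply_zero, smul_eq_mul]

noncomputable def tangentWeight (k : ℕ) : ℝ := (2 * k + 2) / ((k + 1).factorial : ℝ) ^ 2

theorem tangentWeight_succ (k : ℕ) :
    tangentUp k * tangentWeight (k + 1) =
      2 * (2 * ((k + 1 : ℕ) : ℝ) + 1) * tangentWeight k := by
  have := (k + 1).factorial_pos
  rw [tangentUp, tangentWeight, tangentWeight, Nat.factorial_succ (k + 1)]
  push_cast
  field_simp
  ring

theorem prod_tangentUp (k : ℕ) :
    ∏ j ∈ range k, (tangentUp j : ℝ) = (2 * k + 1).factorial * (k + 1).factorial := by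
  induction k with
  | zero => simp
  | succ k ih =>
    rw [prod_range_succ, ih, tangentUp, show 2 * (k + 1) + 1 = 2 * k + 1 + 1 + 1 by ring,
      Nat.factorial_succ (2 * k + 1 + 1), Nat.factorial_succ (2 * k + 1),
      Nat.factorial_succ (k + 1)]
    push_cast
    ring

theorem sq_prod_tangentUp_mul_tangentWeight (k : ℕ) :
    (∏ j ∈ range k, (tangentUp j : ℝ)) ^ 2 * tangentWeight k =
      (2 * k + 1).factorial * (2 * k + 2).factorial := by
  have := (k + 1).factorial_pos
  rw [prod_tangentUp, tangentWeight, Nat.factorial_succ (2 * k + 1)]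
  push_cast
  field_simp
  ring

theorem prod_factorial_Icc_one_two_mul (n : ℕ) :
    ∏ k ∈ Icc 1 (2 * n), k.factorial =
      ∏ k ∈ range n, (2 * k + 1).factorial * (2 * k + 2).factorial := by
  induction n with
  | zero => simp
  | succ n ih =>
    rw [prod_range_succ, ← ih, show 2 * (n + 1) = 2 * n + 1 + 1 by ring,
      prod_Icc_succ_top (by omega), prod_Icc_succ_top (by omega), mul_assoc]

theorem hankel_tangent_shifted (n : ℕ) :
    Matrix.det (fun i j : Fin n => eulerE (2 * ((i : ℕ) + (j : ℕ)) + 3))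
      = ∏ k ∈ Finset.Icc 1 (2*n), (Nat.factorial (k) : ℝ) := by
  have hentries : (fun i j : Fin n => eulerE (2 * ((i : ℕ) + (j : ℕ)) + 3)) =
      Matrix.of fun i j : Fin n => tangentWeight 0 * tangentMotzkinArray (i + j) 0 := by
    ext i j
    rw [eulerE_eq_two_mul_tangentMotzkinArray, tangentWeight]
    norm_num
  rw [hentries, tangentMotzkinArray, det_hankel_motzkinArray tangentWeight_succ,
    ← Nat.cast_prod, prod_factorial_Icc_one_two_mul]
  push_cast
  exact prod_congr rfl fun k _ => sq_prod_tangentUp_mul_tangentWeight k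
end
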